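/- Let ~ be a right congruence on Σ* (Σ a finite alphabet) and let ≈ be its suffix expansion. If ~ has a critical tuple, then the function n ↦ |Σ^{≤n}/≈| grows exponentially. -/

import Mathlib

/-! Common definitions for sliding-window / visibly pushdown formalizations. -/

/-- `γ` grows polynomially: `γ(n) ∈ O(n^k)` for some `k`. -/
def GrowsPolynomially (γ : ℕ → ℕ) : Prop :=
  ∃ k C : ℕ, ∀ n : ℕ, γ n ≤ C * (n + 1) ^ k

/-- `γ` grows exponentially: there is `c > 1` with `γ(n) ≥ c^n` for infinitely many `n`. -/
def GrowsExponentially (γ : ℕ → ℕ) : Prop :=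
  ∃ c : ℝ, 1 < c ∧ ∀ m : ℕ, ∃ n : ℕ, m ≤ n ∧ c ^ n ≤ (γ n : ℝ)

/-- A set of words is suffix-closed. -/
def SuffixClosed {α : Type} (X : Set (List α)) : Prop :=
  ∀ x ∈ X, ∀ s : List α, s <:+ x → s ∈ X

/-- Domain of a partial function presented with `Option`. -/
def pdom {α β : Type} (t : List α → Option β) : Set (List α) := {x | t x ≠ none}

/-- The `t`-growth of `X`: the number of values of `t` on words of `X` of length at most `n`. -/
noncomputable def growthOf {α : Type} {Y : Type} (t : List α → Y) (X : Set (List α)) (n : ℕ) : ℕ :=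
  (t '' {x | x ∈ X ∧ x.length ≤ n}).ncard

/-- Growth of a language: number of its words of length at most `n`. -/
noncomputable def langGrowth {β : Type} (L : Set (List β)) (n : ℕ) : ℕ :=
  {y | y ∈ L ∧ y.length ≤ n}.ncard

/-- Suffix expansion of a (total or partial) function: the tuple of values on all
nonempty suffixes `a₁⋯aₙ, a₂⋯aₙ, …, aₙ` of the input. -/
def cev {α : Type} {Y : Type} (t : List α → Y) (x : List α) : List Y :=
  x.tails.dropLast.map t

/-- Image of `X` under the partial function `t`. -/
def optImage {α β : Type} (t : List α → Option β) (X : Set (List α)) : Set β :=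
  {y | ∃ x ∈ X, t x = some y}

/-- A language is bounded if it is contained in `w₁* w₂* ⋯ w_k*`. -/
def BoundedLang {β : Type} (L : Set (List β)) : Prop :=
  ∃ ws : List (List β), ∀ x ∈ L, ∃ ms : List ℕ, ms.length = ws.length ∧
    x = (List.zipWith (fun (w : List β) (m : ℕ) => (List.replicate m w).flatten) ws ms).flatten

/-- `{u,v}*`: all concatenations of copies of `u` and `v`. -/
def UVStar {α : Type} (u v : List α) : Set (List α) :=
  {w | ∃ l : List (List α), (∀ p ∈ l, p = u ∨ p = v) ∧ w = l.flatten}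

/-- `{u,v}^{≤ n}`: concatenations of at most `n` words, each equal to `u` or `v`. -/
def UVPow {α : Type} (u v : List α) (n : ℕ) : Set (List α) :=
  {w | ∃ l : List (List α), (∀ p ∈ l, p = u ∨ p = v) ∧ l.length ≤ n ∧ w = l.flatten}

/-- The set `{u₂,v₂}{u,v}* Z`. -/
def FoolingSet {α : Type} (u₂ v₂ u v : List α) (Z : Set (List α)) : Set (List α) :=
  {x | ∃ a w z, (a = u₂ ∨ a = v₂) ∧ w ∈ UVStar u v ∧ z ∈ Z ∧ x = a ++ (w ++ z)}

/-- Linear fooling scheme for a partial function `t`. -/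
def IsLinearFoolingScheme {α Y : Type} (t : List α → Option Y)
    (u₂ v₂ u v : List α) (Z : Set (List α)) : Prop :=
  u₂ <:+ u ∧ v₂ <:+ v ∧ u₂.length = v₂.length ∧
  FoolingSet u₂ v₂ u v Z ⊆ pdom t ∧
  ∃ C : ℕ, ∀ n : ℕ, ∃ z ∈ Z, z.length ≤ C * (n + 1) ∧
    ∀ w ∈ UVPow u v n, t (u₂ ++ (w ++ z)) ≠ t (v₂ ++ (w ++ z))

/-- `X` contains a linear fooling set for `t`. -/
def ContainsLinearFoolingSet {α Y : Type} (t : List α → Option Y) (X : Set (List α)) : Prop :=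
  ∃ u₂ v₂ u v Z, IsLinearFoolingScheme t u₂ v₂ u v Z ∧ FoolingSet u₂ v₂ u v Z ⊆ X

/-! ### Transducers and rational functions -/

/-- A finite-state transducer over `(α, β)` with terminal output function. -/
structure Transducer (α β : Type) where
  Q : Type
  finQ : Fintype Q
  I : Set Q
  F : Set Q
  Δ : Set (Q × List α × List β × Q)
  finΔ : Δ.Finite
  o : Q → List β

namespace Transducer

variable {α β : Type}

/-- A run from `p` to `r` with input `x` and output `y`. -/
inductive Run (A : Transducer α β) : A.Q → List α → List β → A.Q → Prop
  | nil (q : A.Q) : Run A q [] [] q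
  | cons {p q r : A.Q} {x₁ x : List α} {y₁ y : List β} :
      (p, x₁, y₁, q) ∈ A.Δ → Run A q x y r → Run A p (x₁ ++ x) (y₁ ++ y) r

/-- The transduction defined by a transducer. -/
def T (A : Transducer α β) : Set (List α × List β) :=
  {p | ∃ q₀ q y, q₀ ∈ A.I ∧ q ∈ A.F ∧ A.Run q₀ p.1 y q ∧ p.2 = y ++ A.o q}

end Transducer

/-- A partial function is rational if its graph is the transduction of some transducer. -/
def IsRationalFun {α β : Type} (t : List α → Option (List β)) : Prop :=
  ∃ A : Transducer α β, ∀ x y, t x = some y ↔ (x, y) ∈ A.T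

/-! ### Right congruences, suffix expansions, critical tuples -/

/-- A right congruence: an equivalence relation compatible with appending on the right. -/
def IsRightCongruence {α : Type} (r : List α → List α → Prop) : Prop :=
  Equivalence r ∧ ∀ x y z : List α, r x y → r (x ++ z) (y ++ z)

/-- Suffix expansion of a relation: words of the same length whose corresponding
nonempty suffixes are all related. -/
def SuffixExpansion {α : Type} (r : List α → List α → Prop) (x y : List α) : Prop :=
  x.length = y.length ∧ ∀ i < x.length, r (x.drop i) (y.drop i)

/-- Number of `r`-classes of words of length at most `n`. -/
noncomputable def classCount {α : Type} (r : List α → List α → Prop) (n : ℕ) : ℕ :=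
  Set.ncard {C : Set (List α) | ∃ x : List α, x.length ≤ n ∧ C = {y | r x y}}

/-- A relation has finite index if it has finitely many classes. -/
def FiniteIndex {α : Type} (r : List α → List α → Prop) : Prop :=
  Set.Finite {C : Set (List α) | ∃ x : List α, C = {y | r x y}}

/-- Critical tuple in a right congruence. -/
def IsCriticalTuple {α : Type} (r : List α → List α → Prop) (u₂ v₂ u v : List α) : Prop :=
  1 ≤ u₂.length ∧ u₂.length = v₂.length ∧ u₂ <:+ u ∧ v₂ <:+ v ∧
  ∀ w ∈ UVStar u v, ¬ r (u₂ ++ w) (v₂ ++ w)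

/-- The Myhill–Nerode right congruence of a language. -/
def MNrel {α : Type} (L : Set (List α)) (x y : List α) : Prop :=
  ∀ z : List α, x ++ z ∈ L ↔ y ++ z ∈ L

/-! ### Suffix distance and the canonical right congruence of a rational function -/

/-- Longest common prefix. -/
def cpre {β : Type} [DecidableEq β] : List β → List β → List β
  | a :: x, b :: y => if a = b then a :: cpre x y else []
  | _, _ => []

/-- `‖x,y‖ = |x| + |y| − 2|x ∧ y|`, where `x ∧ y` is the longest common suffix. -/
def suffDist {β : Type} [DecidableEq β] (x y : List β) : ℕ :=
  x.length + y.length - 2 * (cpre x.reverse y.reverse).length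

/-- Value of a partial function (defaulting to the empty word off the domain). -/
def pval {α β : Type} (t : List α → Option (List β)) (x : List α) : List β :=
  (t x).getD []

/-- The right congruence `R_t` of Reutenauer–Schützenberger. -/
def Rt {α β : Type} [DecidableEq β] (t : List α → Option (List β)) (u v : List α) : Prop :=
  (∀ z : List α, u ++ z ∈ pdom t ↔ v ++ z ∈ pdom t) ∧
  Set.Finite {d : ℕ | ∃ w : List α, u ++ w ∈ pdom t ∧ v ++ w ∈ pdom t ∧
      d = suffDist (pval t (u ++ w)) (pval t (v ++ w))}

/-- Two partial functions are adjacent. -/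
def Adjacent {α β : Type} [DecidableEq β] (t₁ t₂ : List α → Option (List β)) : Prop :=
  Set.Finite {d : ℕ | ∃ w : List α, w ∈ pdom t₁ ∧ w ∈ pdom t₂ ∧
      d = suffDist (pval t₁ w) (pval t₂ w)}

/-! ### Visibly pushdown automata -/

/-- Kinds of letters of a pushdown alphabet. -/
inductive VPKind : Type
  | call : VPKind
  | ret : VPKind
  | intern : VPKind
deriving DecidableEq

/-- A visibly pushdown automaton over the pushdown alphabet determined by `pa`.
The bottom-of-stack symbol `⊥` is represented implicitly by the empty stack. -/
structure VPA (α : Type) (pa : α → VPKind) where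
  Q : Type
  finQ : Fintype Q
  Γ : Type
  finΓ : Fintype Γ
  q₀ : Q
  F : Set Q
  δc : Q → α → Γ × Q
  δr : Q → α → Option Γ → Q
  δi : Q → α → Q

namespace VPA

variable {α : Type} {pa : α → VPKind}

/-- One step of the VPA on a configuration (stack with top at the head, state). -/
def step (A : VPA α pa) (c : List A.Γ × A.Q) (a : α) : List A.Γ × A.Q :=
  match pa a with
  | VPKind.call => ((A.δc c.2 a).1 :: c.1, (A.δc c.2 a).2)
  | VPKind.intern => (c.1, A.δi c.2 a)
  | VPKind.ret =>
    match c.1 with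
    | [] => ([], A.δr c.2 a none)
    | γ :: st => (st, A.δr c.2 a (some γ))

/-- Extended transition function on words. -/
def run (A : VPA α pa) (c : List A.Γ × A.Q) (w : List α) : List A.Γ × A.Q :=
  w.foldl A.step c

/-- The language accepted by a VPA (from the initial configuration `⊥q₀`). -/
def acceptsLang (A : VPA α pa) : Set (List α) :=
  {w | (A.run ([], A.q₀) w).2 ∈ A.F}

/-- Language accepted from a configuration. -/
def AccLang (A : VPA α pa) (c : List A.Γ × A.Q) : Set (List α) :=
  {w | (A.run c w).2 ∈ A.F}

/-- The reachable configurations. -/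
def rConf (A : VPA α pa) : Set (List A.Γ × A.Q) :=
  Set.range (fun w => A.run ([], A.q₀) w)

end VPA

/-- A language is a visibly pushdown language over the pushdown alphabet `pa`. -/
def IsVPL {α : Type} (pa : α → VPKind) (L : Set (List α)) : Prop :=
  ∃ A : VPA α pa, L = A.acceptsLang

/-- Well-matched words over a pushdown alphabet. -/
inductive WellMatched {α : Type} (pa : α → VPKind) : List α → Prop
  | nil : WellMatched pa []
  | intern (a : α) : pa a = VPKind.intern → WellMatched pa [a]
  | append {u v : List α} : WellMatched pa u → WellMatched pa v → WellMatched pa (u ++ v)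
  | wrap {w : List α} {a b : α} : WellMatched pa w → pa a = VPKind.call → pa b = VPKind.ret →
      WellMatched pa (a :: (w ++ [b]))

/-- Descending words: concatenations of well-matched words and return letters. -/
def Descending {α : Type} (pa : α → VPKind) (w : List α) : Prop :=
  ∃ l : List (List α),
    (∀ p ∈ l, WellMatched pa p ∨ ∃ b : α, pa b = VPKind.ret ∧ p = [b]) ∧ w = l.flatten

/-- Length-lexicographic order on configurations `⊥αq` (stacks compared bottom-first). -/
def ConfLe {Q Γ : Type} (ltQ : LinearOrder Q) (ltΓ : LinearOrder Γ)
    (c d : List Γ × Q) : Prop :=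
  c.1.length < d.1.length ∨
    (c.1.length = d.1.length ∧
      (List.Lex ltΓ.lt c.1.reverse d.1.reverse ∨ (c.1 = d.1 ∧ ltQ.le c.2 d.2)))

/-- `rep` chooses from each equivalence class of reachable configurations the
length-lexicographically least representative. -/
def IsRepFun {α : Type} {pa : α → VPKind} (A : VPA α pa)
    (ltQ : LinearOrder A.Q) (ltΓ : LinearOrder A.Γ)
    (rep : List A.Γ × A.Q → List A.Γ × A.Q) : Prop :=
  ∀ c ∈ A.rConf, rep c ∈ A.rConf ∧ A.AccLang (rep c) = A.AccLang c ∧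
    ∀ c' ∈ A.rConf, A.AccLang c' = A.AccLang c → ConfLe ltQ ltΓ (rep c) c'

/-- `ν_A(w)`: the representative of the configuration reached on `w`. -/
def nuA {α : Type} {pa : α → VPKind} (A : VPA α pa)
    (rep : List A.Γ × A.Q → List A.Γ × A.Q) (w : List α) : List A.Γ × A.Q :=
  rep (A.run ([], A.q₀) w)

/-- `σ₀(w)`: the states representing the Myhill–Nerode classes of the nonempty suffixes. -/
def sigma0 {α : Type} {pa : α → VPKind} (A : VPA α pa)
    (rep : List A.Γ × A.Q → List A.Γ × A.Q) (w : List α) : List A.Q :=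
  w.tails.dropLast.map fun s => (nuA A rep s).2

/-- `φ(w)`: the state transformation of a well-matched word. -/
def phiVPA {α : Type} {pa : α → VPKind} (A : VPA α pa) (w : List α) : A.Q → A.Q :=
  fun p => (A.run ([], p) w).2

/-- `σ₁(w) = φ(w) q₂ ⋯ qₙ`, a word over the alphabet `Q^Q ∪ Q`. -/
def sigma1 {α : Type} {pa : α → VPKind} (A : VPA α pa)
    (rep : List A.Γ × A.Q → List A.Γ × A.Q) (w : List α) : List ((A.Q → A.Q) ⊕ A.Q) :=
  Sum.inl (phiVPA A w) :: ((sigma0 A rep w).tail.map Sum.inr)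

/-! ### Real-time right transducers -/

/-- A real-time right transducer (reads its input from right to left). -/
structure RightTransducer (α β : Type) where
  Q : Type
  finQ : Fintype Q
  F : Set Q
  I : Set Q
  Δ : Set (Q × α × List β × Q)
  finΔ : Δ.Finite
  o : Q → List β

namespace RightTransducer

variable {α β : Type}

/-- Input word of a sequence of transitions. -/
def inputOf {Q : Type} (ts : List (Q × α × List β × Q)) : List α :=
  ts.map fun tr => tr.2.1

/-- Output word of a sequence of transitions. -/
def outputOf {Q : Type} (ts : List (Q × α × List β × Q)) : List β :=
  (ts.map fun tr => tr.2.2.1).flatten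

/-- `IsRunFrom A q ts p`: `ts` is a run on its input from the (rightmost) state `p`
to the (leftmost) state `q`; the transitions are listed left to right. -/
def IsRunFrom (A : RightTransducer α β) : A.Q → List (A.Q × α × List β × A.Q) → A.Q → Prop
  | q, [], p => q = p
  | q, tr :: ts, p => tr ∈ A.Δ ∧ tr.1 = q ∧ IsRunFrom A tr.2.2.2 ts p

/-- There is a run on `w` from `p` (right) to `q` (left). -/
def RunOn (A : RightTransducer α β) (q : A.Q) (w : List α) (p : A.Q) : Prop :=
  ∃ ts, A.IsRunFrom q ts p ∧ inputOf ts = w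

/-- `q ⪯ p`: there is a run from `p` to `q`. -/
def Below (A : RightTransducer α β) (q p : A.Q) : Prop :=
  ∃ w, A.RunOn q w p

/-- The partial function defined by a right transducer. -/
def Defines (A : RightTransducer α β) (t : List α → Option (List β)) : Prop :=
  ∀ x y, t x = some y ↔ ∃ p q ts, p ∈ A.F ∧ q ∈ A.I ∧ A.IsRunFrom p ts q ∧
    inputOf ts = x ∧ y = A.o p ++ outputOf ts

/-- Every state occurs on some initial accepting run. -/
def Trim (A : RightTransducer α β) : Prop :=
  ∀ s : A.Q, ∃ p q ts₁ ts₂, p ∈ A.F ∧ q ∈ A.I ∧ A.IsRunFrom p ts₁ s ∧ A.IsRunFrom s ts₂ q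

/-- Every input word has at most one initial accepting run. -/
def Unambiguous (A : RightTransducer α β) : Prop :=
  ∀ p p' q q' ts ts', p ∈ A.F → p' ∈ A.F → q ∈ A.I → q' ∈ A.I →
    A.IsRunFrom p ts q → A.IsRunFrom p' ts' q' → inputOf ts = inputOf ts' →
    p = p' ∧ ts = ts'

/-- `w` is guarded by `p`: some run on `w` from `p` stays in the SCC of `p`. -/
def Guarded (A : RightTransducer α β) (p : A.Q) (w : List α) : Prop :=
  ∃ q', A.RunOn q' w p ∧ A.Below p q'

/-- The transducer is well-behaved: the terminal outputs of guarded accepting runs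
from the same state on words of equal length coincide. -/
def WellBehaved (A : RightTransducer α β) : Prop :=
  ∀ (p q q' : A.Q) ts ts', q ∈ A.F → q' ∈ A.F →
    A.IsRunFrom q ts p → A.IsRunFrom q' ts' p →
    A.Guarded p (inputOf ts) → A.Guarded p (inputOf ts') →
    (inputOf ts).length = (inputOf ts').length →
    A.o q ++ outputOf ts = A.o q' ++ outputOf ts'

end RightTransducer

/-! ### The Parikh-like map Ψ -/

/-- `Ψ(w)`: each letter of `w` paired with its position counted from the right (1-based). -/
def Psi {α : Type} (w : List α) : Set (α × ℕ) :=
  {p | ∃ i : ℕ, w[i]? = some p.1 ∧ p.2 = w.length - i}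

/-- `Ψ(L) = ⋃_{w ∈ L} Ψ(w)`. -/
def PsiL {α : Type} (L : Set (List α)) : Set (α × ℕ) :=
  ⋃ w ∈ L, Psi w

/-!
Let `L = |u||v|` and use the two blocks `u^|v|` and `v^|u|`, both of length `L`, as the
letters of a binary code: a bit string `b₁⋯bₙ` becomes a word of length `nL` in `{u,v}*`.
Two such words that first differ at block `k` share the suffix `x ∈ {u,v}*` after that
block, and cutting the two `k`-th blocks down to their last `|u₂| = |v₂|` letters exposes
`u₂ x` and `v₂ x`, which are not `~`-equivalent. Hence the `2ⁿ` codewords lie in distinct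
`≈`-classes, and `|Σ^{≤nL}/≈| ≥ 2ⁿ = (2^{1/L})^{nL}`.
-/

theorem growsExponentially_of_two_pow_le {γ : ℕ → ℕ} {L : ℕ} (hL : 0 < L)
    (h : ∀ n, 2 ^ n ≤ γ (n * L)) : GrowsExponentially γ := by
  have hLR : (0 : ℝ) < L := by exact_mod_cast hL
  refine ⟨2 ^ (L : ℝ)⁻¹, Real.one_lt_rpow (by norm_num) (by positivity), fun m => ?_⟩
  refine ⟨m * L, Nat.le_mul_of_pos_right m hL, ?_⟩
  calc ((2 : ℝ) ^ (L : ℝ)⁻¹) ^ (m * L) = 2 ^ m := by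
        rw [← Real.rpow_natCast, ← Real.rpow_mul (by norm_num), Nat.cast_mul,
          mul_comm (m : ℝ), inv_mul_cancel_left₀ hLR.ne', Real.rpow_natCast]
    _ ≤ γ (m * L) := by exact_mod_cast h m

section ClassCount

variable {α : Type} {r : List α → List α → Prop}

theorem card_le_classCount [Finite α] {ι : Type} [Fintype ι] (hr : ∀ x, r x x)
    {f : ι → List α} {N : ℕ} (hf : ∀ i, (f i).length ≤ N)
    (hf_inj : ∀ i j, r (f i) (f j) → i = j) : Fintype.card ι ≤ classCount r N := by
  set cls : ι → Set (List α) := fun i => {y | r (f i) y}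
  have hcls_inj : Function.Injective cls := fun i j hij =>
    hf_inj i j (show f j ∈ cls i from hij ▸ hr (f j))
  have hfin : {C | ∃ x : List α, x.length ≤ N ∧ C = {y | r x y}}.Finite :=
    ((List.finite_length_le α N).image fun x => {y | r x y}).subset
      (by rintro _ ⟨x, hx, rfl⟩; exact ⟨x, hx, rfl⟩)
  calc Fintype.card ι = (Set.range cls).ncard := by
        rw [Set.ncard_range_of_injective hcls_inj, Nat.card_eq_fintype_card]
    _ ≤ classCount r N :=
        Set.ncard_le_ncard (by rintro _ ⟨i, rfl⟩; exact ⟨f i, hf i, rfl⟩) hfin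

end ClassCount

namespace SuffixExpansion

variable {α : Type} {r : List α → List α → Prop}

theorem refl (hr : ∀ x, r x x) (x : List α) : SuffixExpansion r x x :=
  ⟨rfl, fun _ _ => hr _⟩

theorem of_append {a b x y : List α} (hab : a.length = b.length)
    (h : SuffixExpansion r (a ++ x) (b ++ y)) : SuffixExpansion r x y := by
  obtain ⟨hlen, hdrop⟩ := h
  simp only [List.length_append, hab, Nat.add_left_cancel_iff] at hlen
  refine ⟨hlen, fun i hi => ?_⟩
  have := hdrop (a.length + i) (by simp; omega)
  rwa [List.drop_length_add_append, hab, List.drop_length_add_append] at this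

end SuffixExpansion

theorem List.IsSuffix.drop_append {α : Type} {s w : List α} (h : s <:+ w) (x : List α) :
    (w ++ x).drop (w.length - s.length) = s ++ x := by
  obtain ⟨t, rfl⟩ := h
  simp

theorem List.IsSuffix.flatten_replicate {α : Type} {s w : List α} (h : s <:+ w) {k : ℕ}
    (hk : k ≠ 0) : s <:+ (List.replicate k w).flatten := by
  obtain ⟨k, rfl⟩ := Nat.exists_eq_succ_of_ne_zero hk
  rw [List.replicate_succ', List.flatten_append, List.flatten_singleton]
  exact h.trans (List.suffix_append _ _)

section Blocks

variable {α : Type} (u v : List α)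

def blockFactors : Bool → List (List α)
  | true => List.replicate v.length u
  | false => List.replicate u.length v

def blockWord (bs : List Bool) : List α := (bs.flatMap (blockFactors u v)).flatten

theorem length_flatten_blockFactors (b : Bool) :
    (blockFactors u v b).flatten.length = u.length * v.length := by
  cases b <;> simp [blockFactors, List.length_flatten, mul_comm]

theorem blockWord_cons (b : Bool) (bs : List Bool) :
    blockWord u v (b :: bs) = (blockFactors u v b).flatten ++ blockWord u v bs := by
  simp [blockWord]

theorem length_blockWord (bs : List Bool) :
    (blockWord u v bs).length = bs.length * (u.length * v.length) := by
  induction bs with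
  | nil => simp [blockWord]
  | cons b bs ih =>
    rw [blockWord_cons, List.length_append, length_flatten_blockFactors, ih,
      List.length_cons, add_one_mul, add_comm]

theorem blockWord_mem_UVStar (bs : List Bool) : blockWord u v bs ∈ UVStar u v := by
  refine ⟨_, fun p hp => ?_, rfl⟩
  obtain ⟨b, -, hp⟩ := List.mem_flatMap.1 hp
  cases b
  · exact Or.inr (List.eq_of_mem_replicate hp)
  · exact Or.inl (List.eq_of_mem_replicate hp)

end Blocks

namespace IsCriticalTuple

variable {α : Type} {r : List α → List α → Prop} {u₂ v₂ u v : List α}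

theorem length_mul_pos (hct : IsCriticalTuple r u₂ v₂ u v) : 0 < u.length * v.length := by
  obtain ⟨hu₂, hlen, hu, hv, -⟩ := hct
  have := hu.length_le
  have := hv.length_le
  exact Nat.mul_pos (by omega) (by omega)

theorem drop_blockFactors_append (hct : IsCriticalTuple r u₂ v₂ u v) (b : Bool)
    (x : List α) :
    ((blockFactors u v b).flatten ++ x).drop (u.length * v.length - u₂.length) =
      (if b then u₂ else v₂) ++ x := by
  obtain ⟨hu₂, hlen, hu, hv, -⟩ := hct
  have hu0 : u.length ≠ 0 := by have := hu.length_le; omega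
  have hv0 : v.length ≠ 0 := by have := hv.length_le; omega
  cases b
  · rw [hlen, ← length_flatten_blockFactors u v false]
    exact (hv.flatten_replicate hu0).drop_append x
  · rw [← length_flatten_blockFactors u v true]
    exact (hu.flatten_replicate hv0).drop_append x

theorem not_suffixExpansion_blockFactors_append (hr : ∀ {x y}, r x y → r y x)
    (hct : IsCriticalTuple r u₂ v₂ u v) {b b' : Bool} (hbb' : b ≠ b') {x : List α}
    (hx : x ∈ UVStar u v) :
    ¬ SuffixExpansion r ((blockFactors u v b).flatten ++ x)
      ((blockFactors u v b').flatten ++ x) := by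
  intro hse
  have hi : u.length * v.length - u₂.length < ((blockFactors u v b).flatten ++ x).length := by
    have := hct.length_mul_pos
    have := hct.1
    rw [List.length_append, length_flatten_blockFactors]
    omega
  have hrel := hse.2 _ hi
  rw [hct.drop_blockFactors_append, hct.drop_blockFactors_append] at hrel
  have hcrit := hct.2.2.2.2 x hx
  cases b <;> cases b'
  · exact hbb' rfl
  · exact hcrit (hr hrel)
  · exact hcrit hrel
  · exact hbb' rfl

theorem eq_of_suffixExpansion_blockWord (hr : ∀ {x y}, r x y → r y x)
    (hct : IsCriticalTuple r u₂ v₂ u v) {bs bs' : List Bool} (hlen : bs.length = bs'.length)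
    (hse : SuffixExpansion r (blockWord u v bs) (blockWord u v bs')) : bs = bs' := by
  induction bs generalizing bs' with
  | nil => exact (List.length_eq_zero_iff.1 hlen.symm).symm
  | cons b bs ih =>
    obtain _ | ⟨b', bs'⟩ := bs'
    · simp at hlen
    rw [blockWord_cons, blockWord_cons] at hse
    have htail : bs = bs' := ih (Nat.succ.inj hlen)
      (hse.of_append (by rw [length_flatten_blockFactors, length_flatten_blockFactors]))
    subst htail
    by_contra hne
    exact hct.not_suffixExpansion_blockFactors_append hr (fun h => hne (by rw [h]))
      (blockWord_mem_UVStar u v bs) hse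

theorem two_pow_le_classCount [Finite α] (hr : Equivalence r)
    (hct : IsCriticalTuple r u₂ v₂ u v) (n : ℕ) :
    2 ^ n ≤ classCount (SuffixExpansion r) (n * (u.length * v.length)) := by
  have := card_le_classCount (SuffixExpansion.refl hr.refl)
    (f := fun bs : Fin n → Bool => blockWord u v (List.ofFn bs))
    (fun bs => by rw [length_blockWord, List.length_ofFn])
    (fun bs bs' hse => List.ofFn_injective
      (hct.eq_of_suffixExpansion_blockWord hr.symm (by simp) hse))
  simpa using this

end IsCriticalTuple

/-- if a right congruence `~` has a critical tuple, then
`n ↦ |Σ^{≤n}/≈|` grows exponentially, where `≈` is the suffix expansion of `~`. -/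
theorem statement4 {α : Type} [Fintype α] (r : List α → List α → Prop)
    (hrc : IsRightCongruence r)
    (hct : ∃ u₂ v₂ u v, IsCriticalTuple r u₂ v₂ u v) :
    GrowsExponentially (classCount (SuffixExpansion r)) := by
  obtain ⟨u₂, v₂, u, v, hct⟩ := hct
  exact growsExponentially_of_two_pow_le hct.length_mul_pos (hct.two_pow_le_classCount hrc.1)
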